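/- For every integer n ≥ 2 there exists a monic separable polynomial f ∈ ℝ[X] of degree n, having a nonreal root among its roots of minimum absolute value, with sep(f) ≥ (1/(1.7·√n)) · M(f)^{1/n}. Hence the dependence on n in the upper bound sep(f) ≤ (34/√n)·M(f)^{1/n} for such real polynomials is optimal up to the constant factor. -/

import Mathlib

open Polynomial

/-- The separation of a polynomial: the minimal distance between distinct roots. -/
noncomputable def polySep (f : Polynomial ℂ) : ℝ :=
  sInf {d : ℝ | ∃ a ∈ f.roots, ∃ b ∈ f.roots, a ≠ b ∧ d = ‖a - b‖}

/-- The Mahler measure of a monic polynomial: the product of `max 1 |α|` over all roots `α`. -/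
noncomputable def mahlerMeasure (f : Polynomial ℂ) : ℝ :=
  (f.roots.map (fun a => max 1 ‖a‖)).prod

/-- width of grid -/
def gW (n : ℕ) : ℕ := Nat.sqrt (n / 2) + 1

/-- the grid point for index j -/
noncomputable def gZ (n j : ℕ) : ℂ :=
  ((1 + j % gW n : ℕ) : ℂ) + ((1 + j / gW n : ℕ) : ℂ) * Complex.I

/-- the real quadratic with roots gZ, conj gZ -/
noncomputable def gQ (n j : ℕ) : Polynomial ℝ :=
  (X - C ((1 + j % gW n : ℕ) : ℝ)) ^ 2 + C (((1 + j / gW n : ℕ) : ℝ)) ^ 2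

noncomputable def gF (n : ℕ) : Polynomial ℝ :=
  (∏ j ∈ Finset.range (n / 2), gQ n j) * (if n % 2 = 1 then X - C 2 else 1)

noncomputable def gR (n : ℕ) : Multiset ℂ :=
  ((Multiset.range (n / 2)).map (gZ n)) +
  ((Multiset.range (n / 2)).map (fun j => (starRingEnd ℂ) (gZ n j))) +
  (if n % 2 = 1 then {2} else 0)

lemma gQ_map (n j : ℕ) : (gQ n j).map (algebraMap ℝ ℂ) =
    (X - C (gZ n j)) * (X - C ((starRingEnd ℂ) (gZ n j))) := by
  have hI : (C Complex.I : Polynomial ℂ) ^ 2 = -1 := by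
    rw [← map_pow, Complex.I_sq, map_neg, map_one]
  have hconj : (starRingEnd ℂ) (gZ n j) =
      ((1 + j % gW n : ℕ) : ℂ) - ((1 + j / gW n : ℕ) : ℂ) * Complex.I := by
    simp [gZ, map_add, map_mul, Complex.conj_I, Complex.conj_natCast]
    ring
  rw [hconj]
  simp only [gQ, Polynomial.map_add, Polynomial.map_pow, Polynomial.map_sub,
    Polynomial.map_X, Polynomial.map_C, gZ]
  set a : ℂ := ((1 + j % gW n : ℕ) : ℂ)
  set b : ℂ := ((1 + j / gW n : ℕ) : ℂ)
  have h1 : (algebraMap ℝ ℂ) ((1 + j % gW n : ℕ) : ℝ) = a := by push_cast [a]; ring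
  have h2 : (algebraMap ℝ ℂ) ((1 + j / gW n : ℕ) : ℝ) = b := by push_cast [b]; ring
  rw [h1, h2, map_add, map_sub, map_mul]
  linear_combination (C b)^2 * hI

lemma gF_map (n : ℕ) : (gF n).map (algebraMap ℝ ℂ) =
    ((gR n).map (fun β => X - C β)).prod := by
  have hprodrange : ∀ (g : ℕ → Polynomial ℂ),
      (((Multiset.range (n/2)).map g)).prod = ∏ j ∈ Finset.range (n/2), g j := by
    intro g; rfl
  simp only [gF, gR, Polynomial.map_mul, Polynomial.map_prod, Multiset.map_add,
    Multiset.prod_add, gQ_map, Multiset.map_map, Function.comp_def]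
  rw [hprodrange, hprodrange, ← Finset.prod_mul_distrib]
  congr 1
  by_cases h : n % 2 = 1 <;>
    simp [h, Polynomial.map_sub, Polynomial.map_X, Polynomial.map_C, Polynomial.map_one]

lemma gF_roots (n : ℕ) : ((gF n).map (algebraMap ℝ ℂ)).roots = gR n := by
  rw [gF_map, roots_multiset_prod_X_sub_C]

lemma gR_card (n : ℕ) : Multiset.card (gR n) = n := by
  simp only [gR]
  by_cases h : n % 2 = 1 <;> simp [h] <;> omega

lemma gF_monic (n : ℕ) : (gF n).Monic := by
  have hq : ∀ j, (gQ n j).Monic := by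
    intro j
    have h1 : ((X - C ((1 + j % gW n : ℕ) : ℝ)) ^ 2).Monic := (monic_X_sub_C _).pow 2
    refine h1.add_of_left ?_
    have hd : ((X - C ((1 + j % gW n : ℕ) : ℝ)) ^ 2).degree = 2 := by
      rw [degree_pow, degree_X_sub_C]; rfl
    rw [hd, ← map_pow]
    exact degree_C_le.trans_lt (by norm_num)
  refine (monic_prod_of_monic _ _ fun j _ => hq j).mul ?_
  by_cases h : n % 2 = 1 <;> simp [h, monic_X_sub_C, monic_one]

lemma gF_natDegree (n : ℕ) : (gF n).natDegree = n := by
  have := natDegree_multiset_prod_X_sub_C_eq_card (gR n)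
  rw [← gF_map n] at this
  rw [← (gF_monic n).natDegree_map (algebraMap ℝ ℂ), this, gR_card]

lemma gZ_re (n j : ℕ) : (gZ n j).re = ((1 + j % gW n : ℕ) : ℝ) := by
  simp [gZ]

lemma gZ_im (n j : ℕ) : (gZ n j).im = ((1 + j / gW n : ℕ) : ℝ) := by
  simp [gZ]

lemma mem_gR {n : ℕ} {β : ℂ} : β ∈ gR n ↔
    (∃ j < n / 2, β = gZ n j ∨ β = (starRingEnd ℂ) (gZ n j)) ∨ (n % 2 = 1 ∧ β = 2) := by
  by_cases h : n % 2 = 1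
  · simp only [gR, h, if_true, Multiset.mem_add, Multiset.mem_map, Multiset.mem_range,
      Multiset.mem_singleton]
    constructor
    · rintro ((⟨j, hj, rfl⟩ | ⟨j, hj, rfl⟩) | rfl)
      exacts [Or.inl ⟨j, hj, Or.inl rfl⟩, Or.inl ⟨j, hj, Or.inr rfl⟩, Or.inr ⟨trivial, rfl⟩]
    · rintro (⟨j, hj, (rfl | rfl)⟩ | ⟨-, rfl⟩)
      exacts [Or.inl (Or.inl ⟨j, hj, rfl⟩), Or.inl (Or.inr ⟨j, hj, rfl⟩), Or.inr rfl]
  · simp only [gR, h, if_false, add_zero, Multiset.mem_add, Multiset.mem_map,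
      Multiset.mem_range, h, false_and, or_false]
    constructor
    · rintro (⟨j, hj, rfl⟩ | ⟨j, hj, rfl⟩)
      exacts [⟨j, hj, Or.inl rfl⟩, ⟨j, hj, Or.inr rfl⟩]
    · rintro ⟨j, hj, (rfl | rfl)⟩
      exacts [Or.inl ⟨j, hj, rfl⟩, Or.inr ⟨j, hj, rfl⟩]

lemma gZ_inj {n : ℕ} {j k : ℕ} (h : gZ n j = gZ n k) : j = k := by
  have hre := congrArg Complex.re h
  have him := congrArg Complex.im h
  rw [gZ_re, gZ_re] at hre
  rw [gZ_im, gZ_im] at him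
  have h1 : 1 + j % gW n = 1 + k % gW n := Nat.cast_injective hre
  have h2 : 1 + j / gW n = 1 + k / gW n := Nat.cast_injective him
  have h1' : j % gW n = k % gW n := by omega
  have h2' : j / gW n = k / gW n := by omega
  calc j = gW n * (j / gW n) + j % gW n := (Nat.div_add_mod _ _).symm
    _ = gW n * (k / gW n) + k % gW n := by rw [h1', h2']
    _ = k := Nat.div_add_mod _ _

lemma gZ_im_pos (n j : ℕ) : 0 < (gZ n j).im := by
  rw [gZ_im]; positivity

lemma gR_nodup (n : ℕ) : (gR n).Nodup := by
  have h1 : ((Multiset.range (n / 2)).map (gZ n)).Nodup :=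
    (Multiset.nodup_range _).map (fun _ _ h => gZ_inj h)
  have h2 : ((Multiset.range (n / 2)).map (fun j => (starRingEnd ℂ) (gZ n j))).Nodup :=
    (Multiset.nodup_range _).map (fun a b h => gZ_inj ((starRingEnd ℂ).injective h))
  have hd12 : Disjoint ((Multiset.range (n / 2)).map (gZ n))
      ((Multiset.range (n / 2)).map (fun j => (starRingEnd ℂ) (gZ n j))) := by
    rw [Multiset.disjoint_left]
    intro x hx hy
    simp only [Multiset.mem_map, Multiset.mem_range] at hx hy
    obtain ⟨j, -, rfl⟩ := hx
    obtain ⟨k, -, hk⟩ := hy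
    have hj := gZ_im_pos n j
    have hk' := gZ_im_pos n k
    rw [← hk] at hj
    simp only [Complex.conj_im] at hj
    linarith
  have h12 : (((Multiset.range (n / 2)).map (gZ n)) +
      ((Multiset.range (n / 2)).map (fun j => (starRingEnd ℂ) (gZ n j)))).Nodup :=
    Multiset.nodup_add.mpr ⟨h1, h2, hd12⟩
  by_cases h : n % 2 = 1
  · simp only [gR, h, if_true]
    refine Multiset.nodup_add.mpr ⟨h12, Multiset.nodup_singleton 2, ?_⟩
    rw [Multiset.disjoint_left]
    intro x hx hy
    rw [Multiset.mem_singleton] at hy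
    subst hy
    rw [Multiset.mem_add] at hx
    have him : (2 : ℂ).im = 0 := by simp
    rcases hx with hx | hx
    · simp only [Multiset.mem_map, Multiset.mem_range] at hx
      obtain ⟨j, -, hj⟩ := hx
      have hpos := gZ_im_pos n j
      rw [← hj] at him
      linarith
    · simp only [Multiset.mem_map, Multiset.mem_range] at hx
      obtain ⟨j, -, hj⟩ := hx
      have hpos := gZ_im_pos n j
      rw [← hj, Complex.conj_im] at him
      linarith
  · simpa only [gR, h, if_false, add_zero] using h12

lemma gKey (n j : ℕ) (hn : 2 ≤ n) (hj : j < n / 2) :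
    100 * ((1 + j % gW n) ^ 2 + (1 + j / gW n) ^ 2) ≤ 289 * n := by
  set p := n / 2 with hp
  set s := Nat.sqrt p with hs
  have hw : gW n = s + 1 := rfl
  have hp1 : 1 ≤ p := by omega
  have hs1 : s * s ≤ p := by simpa [pow_two] using Nat.sqrt_le' p
  have hs2 : p < (s + 1) * (s + 1) := by simpa [pow_two, Nat.succ_eq_add_one] using Nat.lt_succ_sqrt' p
  have ha : j % gW n ≤ s := by
    rw [hw]
    have := Nat.mod_lt j (show 0 < s + 1 by omega)
    omega
  have hb : j / gW n ≤ s := by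
    rw [hw]
    have h1 : j / (s + 1) < s + 1 := (Nat.div_lt_iff_lt_mul (by omega)).mpr (by omega)
    omega
  have hpn : 2 * p ≤ n := by omega
  have hs0 : 1 ≤ s := by
    rcases Nat.eq_zero_or_pos s with h | h
    · rw [h] at hs2; omega
    · exact h
  rcases le_or_gt 2 s with h2 | h2
  · have e1 : (1 + j % gW n) ^ 2 ≤ (1 + s) ^ 2 := Nat.pow_le_pow_left (by omega) 2
    have e2 : (1 + j / gW n) ^ 2 ≤ (1 + s) ^ 2 := Nat.pow_le_pow_left (by omega) 2
    have e3 : 200 * (1 + s) ^ 2 ≤ 578 * (s * s) := by nlinarith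
    have e4 : 578 * (s * s) ≤ 289 * n := by nlinarith
    omega
  · -- s = 1
    have hseq : s = 1 := by omega
    have ha1 : j % gW n ≤ 1 := by omega
    have hb1 : j / gW n ≤ 1 := by omega
    rcases Nat.lt_or_ge n 3 with h3 | h3
    · -- n = 2 : p = 1, j = 0
      have hn2 : n = 2 := by omega
      have hj0 : j = 0 := by omega
      subst hn2; subst hj0
      simp [gW]
    · have e1 : (1 + j % gW n) ^ 2 ≤ 4 := by
        interval_cases h : j % gW n <;> norm_num
      have e2 : (1 + j / gW n) ^ 2 ≤ 4 := by
        interval_cases h : j / gW n <;> norm_num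
      omega

lemma gZ_normSq (n j : ℕ) : Complex.normSq (gZ n j) =
    ((1 + j % gW n : ℕ) : ℝ) ^ 2 + ((1 + j / gW n : ℕ) : ℝ) ^ 2 := by
  rw [Complex.normSq_apply, gZ_re, gZ_im]; ring

lemma sqrt289 : Real.sqrt (2.89) = 1.7 := by
  rw [show (2.89 : ℝ) = 1.7 ^ 2 by norm_num, Real.sqrt_sq (by norm_num)]

lemma gR_normSq_le {n : ℕ} (hn : 2 ≤ n) {β : ℂ} (hβ : β ∈ gR n) :
    Complex.normSq β ≤ 2.89 * n := by
  have hgrid : ∀ j < n / 2, Complex.normSq (gZ n j) ≤ 2.89 * n := by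
    intro j hj
    rw [gZ_normSq]
    have h := gKey n j hn hj
    have h' : (100 : ℝ) * (((1 + j % gW n : ℕ) : ℝ) ^ 2 + ((1 + j / gW n : ℕ) : ℝ) ^ 2)
        ≤ 289 * n := by exact_mod_cast h
    norm_num at h' ⊢
    linarith
  rcases mem_gR.mp hβ with ⟨j, hj, (rfl | rfl)⟩ | ⟨-, rfl⟩
  · exact hgrid j hj
  · rw [Complex.normSq_conj]; exact hgrid j hj
  · have : Complex.normSq 2 = 4 := by
      norm_num [Complex.normSq_apply]
    rw [this]
    have : (2 : ℝ) ≤ n := by exact_mod_cast hn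
    norm_num
    linarith

lemma gR_two_le_normSq {n : ℕ} {β : ℂ} (hβ : β ∈ gR n) : 2 ≤ Complex.normSq β := by
  have hgrid : ∀ j, (2 : ℝ) ≤ Complex.normSq (gZ n j) := by
    intro j
    rw [gZ_normSq]
    have h1 : (1 : ℝ) ≤ ((1 + j % gW n : ℕ) : ℝ) := by exact_mod_cast Nat.le_add_right 1 _
    have h2 : (1 : ℝ) ≤ ((1 + j / gW n : ℕ) : ℝ) := by exact_mod_cast Nat.le_add_right 1 _
    nlinarith
  rcases mem_gR.mp hβ with ⟨j, hj, (rfl | rfl)⟩ | ⟨-, rfl⟩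
  · exact hgrid j
  · rw [Complex.normSq_conj]; exact hgrid j
  · norm_num [Complex.normSq_apply]

lemma gR_abs_le {n : ℕ} (hn : 2 ≤ n) {β : ℂ} (hβ : β ∈ gR n) :
    ‖β‖ ≤ 1.7 * Real.sqrt n := by
  rw [Complex.norm_def, ← sqrt289, ← Real.sqrt_mul (by norm_num)]
  exact Real.sqrt_le_sqrt (gR_normSq_le hn hβ)

lemma gR_int {n : ℕ} {β : ℂ} (hβ : β ∈ gR n) :
    ∃ a b : ℤ, β.re = (a : ℝ) ∧ β.im = (b : ℝ) := by
  rcases mem_gR.mp hβ with ⟨j, hj, (rfl | rfl)⟩ | ⟨-, rfl⟩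
  · exact ⟨((1 + j % gW n : ℕ) : ℤ), ((1 + j / gW n : ℕ) : ℤ),
      by rw [gZ_re]; norm_cast, by rw [gZ_im]; norm_cast⟩
  · refine ⟨((1 + j % gW n : ℕ) : ℤ), -((1 + j / gW n : ℕ) : ℤ), ?_, ?_⟩
    · rw [Complex.conj_re, gZ_re]; norm_cast
    · rw [Complex.conj_im, gZ_im]; norm_cast
  · exact ⟨2, 0, by norm_num, by norm_num⟩

lemma gR_dist {n : ℕ} {α β : ℂ} (hα : α ∈ gR n) (hβ : β ∈ gR n) (hne : α ≠ β) :
    1 ≤ ‖α - β‖ := by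
  obtain ⟨a1, b1, ha1, hb1⟩ := gR_int hα
  obtain ⟨a2, b2, ha2, hb2⟩ := gR_int hβ
  have hre : (α - β).re = ((a1 - a2 : ℤ) : ℝ) := by
    rw [Complex.sub_re, ha1, ha2]; push_cast; ring
  have him : (α - β).im = ((b1 - b2 : ℤ) : ℝ) := by
    rw [Complex.sub_im, hb1, hb2]; push_cast; ring
  have hnz : a1 - a2 ≠ 0 ∨ b1 - b2 ≠ 0 := by
    by_contra h
    push_neg at h
    apply hne
    apply Complex.ext
    · rw [ha1, ha2]; exact_mod_cast congrArg (Int.cast : ℤ → ℝ) (by omega : a1 = a2)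
    · rw [hb1, hb2]; exact_mod_cast congrArg (Int.cast : ℤ → ℝ) (by omega : b1 = b2)
  have hint : 1 ≤ (a1 - a2) ^ 2 + (b1 - b2) ^ 2 := by
    rcases hnz with h | h
    · nlinarith [sq_nonneg (b1 - b2), Int.one_le_abs h, sq_abs (a1 - a2),
        sq_nonneg (|a1 - a2| - 1)]
    · nlinarith [sq_nonneg (a1 - a2), Int.one_le_abs h, sq_abs (b1 - b2),
        sq_nonneg (|b1 - b2| - 1)]
  have hns : 1 ≤ Complex.normSq (α - β) := by
    rw [Complex.normSq_apply, hre, him]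
    have : (1 : ℝ) ≤ ((a1 - a2 : ℤ) : ℝ) ^ 2 + ((b1 - b2 : ℤ) : ℝ) ^ 2 := by
      exact_mod_cast hint
    nlinarith
  have h0 := norm_nonneg (α - β)
  nlinarith [Complex.sq_norm (α - β)]

lemma multiset_prod_le_pow {s : Multiset ℝ} {c : ℝ} (h : ∀ x ∈ s, 0 ≤ x ∧ x ≤ c) :
    s.prod ≤ c ^ (Multiset.card s) := by
  induction s using Multiset.induction_on with
  | empty => simp
  | cons a t ih =>
    simp only [Multiset.prod_cons, Multiset.card_cons, pow_succ]
    have ha := h a (Multiset.mem_cons_self a t)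
    have ht : ∀ x ∈ t, 0 ≤ x ∧ x ≤ c := fun x hx => h x (Multiset.mem_cons_of_mem hx)
    have htp : 0 ≤ t.prod := Multiset.prod_nonneg (fun x hx => (ht x hx).1)
    have hc : 0 ≤ c := le_trans ha.1 ha.2
    calc a * t.prod ≤ c * c ^ Multiset.card t := mul_le_mul ha.2 (ih ht) htp hc
      _ = c ^ Multiset.card t * c := mul_comm _ _

lemma multiset_one_le_prod {s : Multiset ℝ} (h : ∀ x ∈ s, 1 ≤ x) : 1 ≤ s.prod := by
  induction s using Multiset.induction_on with
  | empty => simp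
  | cons a t ih =>
    simp only [Multiset.prod_cons]
    have ha := h a (Multiset.mem_cons_self a t)
    have ht := ih fun x hx => h x (Multiset.mem_cons_of_mem hx)
    nlinarith

theorem exists_real_poly_nonreal_min_root_sep_ge (n : ℕ) (hn : 2 ≤ n) :
    ∃ f : Polynomial ℝ, f.Monic ∧ f.Separable ∧ f.natDegree = n ∧
      (∃ α ∈ (f.map (algebraMap ℝ ℂ)).roots,
        α.im ≠ 0 ∧ ∀ β ∈ (f.map (algebraMap ℝ ℂ)).roots, ‖α‖ ≤ ‖β‖) ∧
      polySep (f.map (algebraMap ℝ ℂ)) ≥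
        (1 / (1.7 * Real.sqrt n)) *
          _root_.mahlerMeasure (f.map (algebraMap ℝ ℂ)) ^ ((1 : ℝ) / (n : ℝ)) := by
  have hn0 : (0 : ℝ) < n := by positivity
  have hs0 : 0 < Real.sqrt n := Real.sqrt_pos.mpr hn0
  have hroots : ((gF n).map (algebraMap ℝ ℂ)).roots = gR n := gF_roots n
  have hα0 : gZ n 0 ∈ gR n := mem_gR.mpr (Or.inl ⟨0, by omega, Or.inl rfl⟩)
  refine ⟨gF n, gF_monic n, ?_, gF_natDegree n, ?_, ?_⟩
  · -- separable
    rw [← Polynomial.separable_map (algebraMap ℝ ℂ)]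
    have hne : (gF n).map (algebraMap ℝ ℂ) ≠ 0 :=
      ((gF_monic n).map (algebraMap ℝ ℂ)).ne_zero
    rw [← Polynomial.nodup_roots_iff_of_splits hne (IsAlgClosed.splits _), hroots]
    exact gR_nodup n
  · -- min modulus nonreal root
    refine ⟨gZ n 0, by rw [hroots]; exact hα0, ?_, ?_⟩
    · rw [gZ_im]; positivity
    · intro β hβ
      rw [hroots] at hβ
      rw [Complex.norm_def, Complex.norm_def]
      refine Real.sqrt_le_sqrt ?_
      have h2 : Complex.normSq (gZ n 0) = 2 := by
        rw [gZ_normSq]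
        norm_num
      rw [h2]
      exact gR_two_le_normSq hβ
  · -- separation bound
    have hone : (1 : ℝ) ≤ polySep ((gF n).map (algebraMap ℝ ℂ)) := by
      unfold polySep
      rw [hroots]
      have hconj : (starRingEnd ℂ) (gZ n 0) ∈ gR n :=
        mem_gR.mpr (Or.inl ⟨0, by omega, Or.inr rfl⟩)
      have hne : gZ n 0 ≠ (starRingEnd ℂ) (gZ n 0) := by
        intro h
        have := congrArg Complex.im h
        rw [Complex.conj_im] at this
        have hp := gZ_im_pos n 0
        linarith
      refine le_csInf ⟨_, gZ n 0, hα0, (starRingEnd ℂ) (gZ n 0), hconj, hne, rfl⟩ ?_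
      rintro d ⟨a, ha, b, hb, hab, rfl⟩
      exact gR_dist ha hb hab
    have hM1 : (1 : ℝ) ≤ _root_.mahlerMeasure ((gF n).map (algebraMap ℝ ℂ)) := by
      unfold _root_.mahlerMeasure
      exact multiset_one_le_prod (by
        intro x hx
        rw [Multiset.mem_map] at hx
        obtain ⟨a, -, rfl⟩ := hx
        exact le_max_left _ _)
    have h17 : (1 : ℝ) ≤ 1.7 * Real.sqrt n := by
      have h1 : (1 : ℝ) ≤ Real.sqrt n := by
        rw [show (1 : ℝ) = Real.sqrt 1 from (Real.sqrt_one).symm]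
        exact Real.sqrt_le_sqrt (by exact_mod_cast Nat.one_le_iff_ne_zero.mpr (by omega))
      nlinarith
    have hMle : _root_.mahlerMeasure ((gF n).map (algebraMap ℝ ℂ)) ≤ (1.7 * Real.sqrt n) ^ n := by
      unfold _root_.mahlerMeasure
      rw [hroots]
      have hcard : Multiset.card ((gR n).map (fun a => max 1 ‖a‖)) = n := by
        rw [Multiset.card_map, gR_card]
      calc ((gR n).map (fun a => max 1 ‖a‖)).prod
          ≤ (1.7 * Real.sqrt n) ^ (Multiset.card ((gR n).map (fun a => max 1 ‖a‖))) := by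
            refine multiset_prod_le_pow ?_
            intro x hx
            rw [Multiset.mem_map] at hx
            obtain ⟨a, ha, rfl⟩ := hx
            exact ⟨le_trans zero_le_one (le_max_left _ _),
              max_le h17 (gR_abs_le hn ha)⟩
        _ = (1.7 * Real.sqrt n) ^ n := by rw [hcard]
    have hrpow : _root_.mahlerMeasure ((gF n).map (algebraMap ℝ ℂ)) ^ ((1 : ℝ) / (n : ℝ))
        ≤ 1.7 * Real.sqrt n := by
      have h0M : (0 : ℝ) ≤ _root_.mahlerMeasure ((gF n).map (algebraMap ℝ ℂ)) := le_trans zero_le_one hM1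
      have := Real.rpow_le_rpow h0M hMle (by positivity : (0:ℝ) ≤ (1 : ℝ) / (n : ℝ))
      refine le_trans this ?_
      rw [← Real.rpow_natCast (1.7 * Real.sqrt n) n, ← Real.rpow_mul (by positivity)]
      rw [show (n : ℝ) * ((1 : ℝ) / (n : ℝ)) = 1 by field_simp]
      rw [Real.rpow_one]
    have hfinal : (1 / (1.7 * Real.sqrt n)) *
        _root_.mahlerMeasure ((gF n).map (algebraMap ℝ ℂ)) ^ ((1 : ℝ) / (n : ℝ)) ≤ 1 := by
      rw [div_mul_eq_mul_div, one_mul, div_le_one (by positivity)]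
      exact hrpow
    exact le_trans hfinal hone
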